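/- Let α be a peak composition of n. For every marked peak composition tableau T ∈ MPCT(α), the standardisation Std(T) is a standard marked peak composition tableau of shape α, i.e. Std(T) ∈ SMPCT(α). -/

import Mathlib

open scoped Classical

noncomputable section

namespace QSQ

/-- A box `(c, r)`: column `c`, row `r` (both 1-indexed, rows counted from the bottom). -/
abbrev Box : Type := ℕ × ℕ

/-- An entry of the marked alphabet: `(i, true)` represents `i′`, `(i, false)` represents `i`. -/
abbrev MEntry : Type := ℕ × Bool

/-- Code realising the marked-alphabet order `1′ < 1 < 2′ < 2 < ⋯`. -/
def mcode (x : MEntry) : ℕ := 2 * x.1 - (if x.2 then 1 else 0)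

/-- `α` is a composition of `n`: a list of positive integers summing to `n`. -/
def IsComposition (n : ℕ) (α : List ℕ) : Prop := (∀ a ∈ α, 0 < a) ∧ α.sum = n

/-- All parts are positive, and every part except possibly the last is `> 1`. -/
def PeakShape (α : List ℕ) : Prop :=
  (∀ a ∈ α, 0 < a) ∧ ∀ i, i + 1 < α.length → 1 < α.getD i 0

/-- `α` is a peak composition of `n`. -/
def IsPeakComposition (n : ℕ) (α : List ℕ) : Prop := IsComposition n α ∧ PeakShape α

/-- Box `(c, r)` belongs to the diagram `D_α`. -/
def inDiagram (α : List ℕ) (b : Box) : Prop :=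
  1 ≤ b.1 ∧ 1 ≤ b.2 ∧ b.2 ≤ α.length ∧ b.1 ≤ α.getD (b.2 - 1) 0

instance (α : List ℕ) (b : Box) : Decidable (inDiagram α b) := by
  unfold inDiagram; infer_instance

/-- The diagram `D_α` as a finite set of boxes. -/
def diagramFinset (α : List ℕ) : Finset Box :=
  ((Finset.Icc 1 (α.foldr max 0)) ×ˢ (Finset.Icc 1 α.length)).filter (fun b => inDiagram α b)

/-- `B` is the set of boxes of the diagram of some peak composition. -/
def IsPeakDiagram (B : Set Box) : Prop :=
  ∃ γ : List ℕ, PeakShape γ ∧ B = {b | inDiagram γ b}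

/-- `β` refines `α`: `α` is obtained by summing consecutive entries of `β`. -/
def Refines (β α : List ℕ) : Prop :=
  ∃ L : List (List ℕ), (∀ l ∈ L, l ≠ []) ∧ L.flatten = β ∧ L.map List.sum = α

/-- `set(γ) = {γ₁, γ₁+γ₂, …, γ₁+⋯+γ_{k-1}}`, the proper partial sums. -/
def setOfComp (γ : List ℕ) : Finset ℕ :=
  ((List.range (γ.length - 1)).map (fun i => (γ.take (i + 1)).sum)).toFinset

/-- `comp_n(X)`: the composition of `n` whose set of proper partial sums is `X ⊆ [n-1]`. -/
def compOf (n : ℕ) (X : Finset ℕ) : List ℕ :=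
  let l := (0 :: X.sort (· ≤ ·)) ++ [n]
  (List.range (l.length - 1)).map (fun i => l.getD (i + 1) 0 - l.getD i 0)

/-- `Peak(X) = {i ∈ X : i − 1 ∉ X and i ≠ 1}`. -/
def peakSet (X : Finset ℕ) : Finset ℕ := X.filter (fun i => (i - 1) ∉ X ∧ i ≠ 1)

/-! ### Marked peak composition tableaux -/

/-- `T` is a marked peak composition tableau of shape `α` (a peak composition of `n`).
Fillings take the default value `(0, false)` outside the diagram. -/
structure IsMPCT (n : ℕ) (α : List ℕ) (T : Box → MEntry) : Prop where
  offDiag : ∀ b, ¬ inDiagram α b → T b = (0, false)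
  pos : ∀ b, inDiagram α b → 1 ≤ (T b).1
  /-- (MPCT1) rows weakly increase, with no repeated marked entry in a row. -/
  row_weak : ∀ c c' r, c < c' → inDiagram α (c, r) → inDiagram α (c', r) →
      mcode (T (c, r)) ≤ mcode (T (c', r)) ∧ ((T (c, r)).2 = true → T (c, r) ≠ T (c', r))
  /-- (MPCT2) the first column strictly increases bottom to top. -/
  col_strict : ∀ r r', r < r' → inDiagram α (1, r) → inDiagram α (1, r') →
      mcode (T (1, r)) < mcode (T (1, r'))
  /-- (MPCT3) the boxes with entries among `{1', 1, …, k', k}` form a peak-composition diagram. -/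
  peak_filter : ∀ k ≤ n, IsPeakDiagram {b | inDiagram α b ∧ (T b).1 ≤ k}
  /-- (MPCT4) an unmarked `i` in box `(2,r)` forbids `i` and `i'` in box `(1,r+1)`. -/
  mpct4 : ∀ r, inDiagram α (2, r) → inDiagram α (1, r + 1) → (T (2, r)).2 = false →
      (T (1, r + 1)).1 ≠ (T (2, r)).1

/-- The number of occurrences of `i` or `i'` in `T`. -/
def wtFun (α : List ℕ) (T : Box → MEntry) (i : ℕ) : ℕ :=
  ((diagramFinset α).filter (fun b => (T b).1 = i)).card

/-- The weight of `T` as a list `(wt(T)₁, …, wt(T)_m)`, `m` the largest value occurring. -/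
def wtList (α : List ℕ) (T : Box → MEntry) : List ℕ :=
  (List.range ((diagramFinset α).sup (fun b => (T b).1))).map (fun i => wtFun α T (i + 1))

/-- `T ∈ MPCT(α)`: an MPCT whose weight has no zero entry to the left of a nonzero entry. -/
def InMPCT (n : ℕ) (α : List ℕ) (T : Box → MEntry) : Prop :=
  IsMPCT n α T ∧ ∀ i j, 1 ≤ i → i < j → wtFun α T i = 0 → wtFun α T j = 0

/-- `T ∈ SMPCT(α)`: each number `1, …, n` appears exactly once (marked or unmarked). -/
def InSMPCT (n : ℕ) (α : List ℕ) (T : Box → MEntry) : Prop :=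
  InMPCT n α T ∧ ∀ i, 1 ≤ i → i ≤ n → wtFun α T i = 1

/-! ### Standardisation -/

/-- Secondary key for the standardisation order: marked entries of a given value are taken
bottom to top; unmarked ones from the highest row downwards. -/
def stdk2 (α : List ℕ) (T : Box → MEntry) (b : Box) : ℕ :=
  if (T b).2 then b.2 else α.length + 1 - b.2

/-- The strict total order on boxes in which standardisation assigns `1, 2, …, n`. -/
def keyLt (α : List ℕ) (T : Box → MEntry) (a b : Box) : Prop :=
  mcode (T a) < mcode (T b) ∨
    (mcode (T a) = mcode (T b) ∧ (stdk2 α T a < stdk2 α T b ∨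
      (stdk2 α T a = stdk2 α T b ∧ a.1 < b.1)))

/-- The standardisation map: box `b` receives the rank of `b` in the standardisation order,
keeping its mark. -/
def stdize (α : List ℕ) (T : Box → MEntry) : Box → MEntry := fun b =>
  if inDiagram α b then
    (((diagramFinset α).filter (fun a => keyLt α T a b)).card + 1, (T b).2)
  else (0, false)

/-- The descent set of `S ∈ SMPCT(α)`: `i` is a descent if `i` is unmarked and strictly below
`i+1`, or `i+1` is marked and weakly below `i`. -/
def DesM (n : ℕ) (α : List ℕ) (S : Box → MEntry) : Finset ℕ :=
  (Finset.Icc 1 (n - 1)).filter (fun i =>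
    ∃ b ∈ diagramFinset α, ∃ b' ∈ diagramFinset α, (S b).1 = i ∧ (S b').1 = i + 1 ∧
      (((S b).2 = false ∧ b.2 < b'.2) ∨ ((S b').2 = true ∧ b'.2 ≤ b.2)))

/-- Remove all marks. -/
def unmark (S : Box → MEntry) : Box → ℕ := fun b => (S b).1

/-! ### Standard (unmarked) tableaux -/

/-- `T` is a standard immaculate tableau of shape `α ⊨ n`: a bijective filling by `1, …, n`
with rows increasing left to right and the first column increasing bottom to top. -/
structure IsSIT (n : ℕ) (α : List ℕ) (T : Box → ℕ) : Prop where
  offDiag : ∀ b, ¬ inDiagram α b → T b = 0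
  range : ∀ b, inDiagram α b → 1 ≤ T b ∧ T b ≤ n
  inj : ∀ b b', inDiagram α b → inDiagram α b' → T b = T b' → b = b'
  surj : ∀ i, 1 ≤ i → i ≤ n → ∃ b, inDiagram α b ∧ T b = i
  row_strict : ∀ c c' r, c < c' → inDiagram α (c, r) → inDiagram α (c', r) →
      T (c, r) < T (c', r)
  col_strict : ∀ r r', r < r' → inDiagram α (1, r) → inDiagram α (1, r') →
      T (1, r) < T (1, r')

/-- (SPCT3)/(SPYCT3): for every `k ≤ n` the boxes with entries `≤ k` form the diagram of a
peak composition. -/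
def SPCT3 (n : ℕ) (α : List ℕ) (T : Box → ℕ) : Prop :=
  ∀ k ≤ n, IsPeakDiagram {b | inDiagram α b ∧ T b ≤ k}

/-- Standard peak composition tableau. -/
def IsSPCT (n : ℕ) (α : List ℕ) (T : Box → ℕ) : Prop := IsSIT n α T ∧ SPCT3 n α T

/-- (SPYCT4): if `T(c,r) < T(c+1,r')` for some `r' < r` then box `(c+1,r)` exists and
`T(c+1,r) < T(c+1,r')`. -/
def SPYCT4 (α : List ℕ) (T : Box → ℕ) : Prop :=
  ∀ c r r', r' < r → inDiagram α (c, r) → inDiagram α (c + 1, r') →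
    T (c, r) < T (c + 1, r') → inDiagram α (c + 1, r) ∧ T (c + 1, r) < T (c + 1, r')

/-- Standard Young composition tableau. -/
def IsSYCT (n : ℕ) (α : List ℕ) (T : Box → ℕ) : Prop := IsSIT n α T ∧ SPYCT4 α T

/-- Standard peak Young composition tableau (of peak shape `α ⊨ n`). -/
def IsSPYCT (n : ℕ) (α : List ℕ) (T : Box → ℕ) : Prop :=
  IsPeakComposition n α ∧ IsSIT n α T ∧ SPCT3 n α T ∧ SPYCT4 α T

/-- `Des↑(T) = {i : i+1 is strictly above i}`. -/
def DesUp (n : ℕ) (α : List ℕ) (T : Box → ℕ) : Finset ℕ :=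
  (Finset.Icc 1 (n - 1)).filter (fun i =>
    ∃ b ∈ diagramFinset α, ∃ b' ∈ diagramFinset α, T b = i ∧ T b' = i + 1 ∧ b.2 < b'.2)

def PeakUp (n : ℕ) (α : List ℕ) (T : Box → ℕ) : Finset ℕ := peakSet (DesUp n α T)

/-- `Des←(T) = {i : i+1 is weakly left of i}`. -/
def DesLeft (n : ℕ) (α : List ℕ) (T : Box → ℕ) : Finset ℕ :=
  (Finset.Icc 1 (n - 1)).filter (fun i =>
    ∃ b ∈ diagramFinset α, ∃ b' ∈ diagramFinset α, T b = i ∧ T b' = i + 1 ∧ b'.1 ≤ b.1)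

def PeakLeft (n : ℕ) (α : List ℕ) (T : Box → ℕ) : Finset ℕ := peakSet (DesLeft n α T)

/-! ### Dual immaculate recording tableaux -/

/-- `i+1` lies strictly right of `i` in `Q` (so `i+1` continues the row strip of `i`). -/
def ContR (β : List ℕ) (Q : Box → ℕ) (i : ℕ) : Prop :=
  ∃ b ∈ diagramFinset β, ∃ b' ∈ diagramFinset β, Q b = i ∧ Q b' = i + 1 ∧ b.1 < b'.1

/-- `Q` is a dual immaculate recording tableau of shape `β ⊨ n`. -/
structure IsDIRT (n : ℕ) (β : List ℕ) (Q : Box → ℕ) : Prop where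
  offDiag : ∀ b, ¬ inDiagram β b → Q b = 0
  range : ∀ b, inDiagram β b → 1 ≤ Q b ∧ Q b ≤ n
  inj : ∀ b b', inDiagram β b → inDiagram β b' → Q b = Q b' → b = b'
  surj : ∀ i, 1 ≤ i → i ≤ n → ∃ b, inDiagram β b ∧ Q b = i
  /-- (DIRT1) -/
  row_strict : ∀ c c' r, c < c' → inDiagram β (c, r) → inDiagram β (c', r) →
      Q (c, r) < Q (c', r)
  /-- (DIRT3) first-column entries increase from top to bottom. -/
  col_top_down : ∀ r r', r < r' → inDiagram β (1, r) → inDiagram β (1, r') →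
      Q (1, r') < Q (1, r)
  /-- (DIRT2) row strips start in the first column. -/
  strips_start : ∀ i b, 1 ≤ i → i ≤ n → inDiagram β b → Q b = i →
      (i = 1 ∨ ¬ ContR β Q (i - 1)) → b.1 = 1
  /-- (DIRT4) -/
  dirt4 : ∀ c r r', r' < r → inDiagram β (c, r) → inDiagram β (c, r') →
      Q (c, r') < Q (c, r) → inDiagram β (c + 1, r') ∧ Q (c + 1, r') < Q (c, r)

/-- `Q` has row strip shape `γ`: the breaks between row strips occur exactly at the proper
partial sums of `γ`. -/
def HasRowStripShape (n : ℕ) (β : List ℕ) (Q : Box → ℕ) (γ : List ℕ) : Prop :=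
  IsComposition n γ ∧ ∀ i, 1 ≤ i → i + 1 ≤ n → (ContR β Q i ↔ i ∉ setOfComp γ)

/-! ### Quasisymmetric functions -/

/-- The monomial quasisymmetric function `M_α` in variables indexed by `ℕ`. -/
def Mqs (α : List ℕ) : MvPowerSeries ℕ ℚ := fun d =>
  if ∃ f : Fin α.length → ℕ, StrictMono f ∧
      d = ∑ j : Fin α.length, Finsupp.single (f j) (α.get j) then 1 else 0

/-- The fundamental quasisymmetric function `F_α = Σ_{β refines α} M_β`. -/
def Fqs (α : List ℕ) : MvPowerSeries ℕ ℚ :=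
  ∑ᶠ β ∈ {β : List ℕ | Refines β α}, Mqs β

/-- The peak function `K_α` for a peak composition `α ⊨ n`. -/
def Kfn (n : ℕ) (α : List ℕ) : MvPowerSeries ℕ ℚ :=
  (MvPowerSeries.C : ℚ →+* MvPowerSeries ℕ ℚ) ((2 : ℚ) ^ ((peakSet (setOfComp α)).card + 1)) *
    ∑ᶠ β ∈ {β : List ℕ | IsComposition n β ∧
      peakSet (setOfComp α) ⊆ symmDiff (setOfComp β) ((setOfComp β).image (· + 1))}, Fqs β

/-- The quasisymmetric Schur Q-function `Q̃_α = Σ_{T ∈ MPCT(α)} M_{wt(T)}`. -/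
def Qtilde (n : ℕ) (α : List ℕ) : MvPowerSeries ℕ ℚ :=
  ∑ᶠ T ∈ {T : Box → MEntry | InMPCT n α T}, Mqs (wtList α T)

/-- The peak Young quasisymmetric Schur function
`S̃_α = Σ_{T ∈ SPYCT(α)} K_{comp_n(Peak←(T))}`. -/
def Stilde (n : ℕ) (α : List ℕ) : MvPowerSeries ℕ ℚ :=
  ∑ᶠ T ∈ {T : Box → ℕ | IsSPYCT n α T}, Kfn n (compOf n (PeakLeft n α T))

/-! ### The insertion algorithm of Allen–Hallam–Mason -/

/-- A tableau given concretely as its list of rows, from bottom to top. -/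
def shapeOf (rows : List (List ℕ)) : List ℕ := rows.map List.length

/-- The filling `Box → ℕ` determined by a list of rows (bottom to top). -/
def toFilling (rows : List (List ℕ)) : Box → ℕ := fun b =>
  if 1 ≤ b.1 ∧ 1 ≤ b.2 then (rows.getD (b.2 - 1) []).getD (b.1 - 1) 0 else 0

/-- The augmented-diagram scan order: columns right to left, each column top to bottom.
(Positions not present in a given row are simply skipped by the insertion step.) -/
def scanList (rows : List (List ℕ)) : List (ℕ × ℕ) :=
  let C := (rows.map List.length).foldr max 0 + 1
  ((List.range C).reverse.map (fun ci =>
    (List.range rows.length).reverse.map (fun ri => (ci + 1, ri + 1)))).flatten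

/-- One insertion of `k` (Procedure 3.1 of Allen–Hallam–Mason): walk the scan list looking for
the first box `(c,r)` with `T̄(c-1,r) ≤ k < T̄(c,r)`; place at an augmented box, bump at an
interior box and continue with the bumped entry, or create a new row (in the highest position
in the first column with all first-column entries below smaller than `k`) if the scan ends.
Returns the new rows and the position of the newly created box. -/
def insertScan : List (ℕ × ℕ) → ℕ → List (List ℕ) → List (List ℕ) × ℕ × ℕ
  | [], k, rows =>
      let j := (rows.takeWhile (fun row => row.headD 0 < k)).length
      (rows.take j ++ [[k]] ++ rows.drop j, (1, j + 1))
  | (c, r) :: rest, k, rows =>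
      let row := rows.getD (r - 1) []
      if 2 ≤ c ∧ c ≤ row.length + 1 ∧ row.getD (c - 2) 0 ≤ k then
        if c = row.length + 1 then
          (rows.set (r - 1) (row ++ [k]), (c, r))
        else if k < row.getD (c - 1) 0 then
          insertScan rest (row.getD (c - 1) 0) (rows.set (r - 1) (row.set (c - 1) k))
        else insertScan rest k rows
      else insertScan rest k rows

/-- The reading word of a filling of shape `α`: rows read top to bottom, left to right. -/
def readingWord (α : List ℕ) (T : Box → ℕ) : List ℕ :=
  ((List.range α.length).reverse.map (fun ri =>
    (List.range (α.getD ri 0)).map (fun ci => T (ci + 1, ri + 1)))).flatten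

/-- Reading insertion: insert the letters of `w` successively into the (initially empty)
insertion tableau `P`, recording in `Q` the label of each newly created box. -/
def readingInsertPQ (w : List ℕ) : List (List ℕ) × List (List ℕ) :=
  w.foldl (fun PQ k =>
    let res := insertScan (scanList PQ.1) k PQ.1
    let c := res.2.1
    let r := res.2.2
    let j := (PQ.2.map List.length).sum + 1
    if c = 1 then
      (res.1, PQ.2.take (r - 1) ++ [[j]] ++ PQ.2.drop (r - 1))
    else
      (res.1, PQ.2.set (r - 1) ((PQ.2.getD (r - 1) []) ++ [j]))) ([], [])

/-! ### Procedure 5.2: generating DIRTs -/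

/-- `PlaceSeq rows v lc cnt out`: starting from `rows`, place the `cnt` entries
`v, v+1, …, v+cnt-1` one at a time, each at the end of some row strictly to the right of the
previously placed entry (whose column was `lc`), never placing at the end of a row of length
`j` when some lower row has length `j + 1`; `out` is the result. -/
inductive PlaceSeq : List (List ℕ) → ℕ → ℕ → ℕ → List (List ℕ) → Prop
  | refl (rows : List (List ℕ)) (v lc : ℕ) : PlaceSeq rows v lc 0 rows
  | step (rows : List (List ℕ)) (v lc cnt : ℕ) (r : ℕ) (out : List (List ℕ))
      (hr : r < rows.length)
      (hright : lc < (rows.getD r []).length + 1)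
      (hrule3 : ∀ r' < r, (rows.getD r' []).length ≠ (rows.getD r []).length + 1)
      (next : PlaceSeq (rows.set r ((rows.getD r []) ++ [v])) (v + 1)
        ((rows.getD r []).length + 1) cnt out) :
      PlaceSeq rows v lc (cnt + 1) out


/-! Standardisation ranks the boxes in a strict total order `keyLt` refining the order of the
entries, so `Std(T)` uses each of `1, …, n` exactly once. Each axiom of an MPCT for `Std(T)`
reduces to one box preceding another in this order: along a row by (MPCT1), up the first column
by (MPCT2), and from `(2, r)` to `(1, r + 1)` by (MPCT3) and (MPCT4). In particular the boxes of
`Std(T)` with entries `≤ k` form a down-set of `keyLt`, and these three closure properties make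
any such down-set a peak diagram. -/

open Finset

lemma mem_diagramFinset {α : List ℕ} {b : Box} : b ∈ diagramFinset α ↔ inDiagram α b := by
  refine ⟨fun h => (mem_filter.1 h).2, fun h => mem_filter.2 ⟨?_, h⟩⟩
  obtain ⟨h1, h2, h3, h4⟩ := h
  rw [List.getD_eq_getElem _ _ (by omega)] at h4
  exact mem_product.2 ⟨mem_Icc.2 ⟨h1, List.le_max_of_le' 0 (List.getElem_mem _) h4⟩,
    mem_Icc.2 ⟨h2, h3⟩⟩

lemma card_diagramFinset (α : List ℕ) : #(diagramFinset α) = α.sum := by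
  have hrow : ∀ i ∈ range α.length,
      #((diagramFinset α).filter (fun b => b.2 - 1 = i)) = α.getD i 0 := by
    intro i hi
    rw [mem_range] at hi
    have hfib : (diagramFinset α).filter (fun b => b.2 - 1 = i)
        = Icc 1 (α.getD i 0) ×ˢ {i + 1} := by
      ext ⟨c, r⟩
      simp only [mem_filter, mem_diagramFinset, inDiagram, mem_product, mem_Icc, mem_singleton]
      constructor
      · rintro ⟨⟨h1, h2, -, h4⟩, rfl⟩
        exact ⟨⟨h1, h4⟩, by omega⟩
      · rintro ⟨⟨h1, h4⟩, rfl⟩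
        exact ⟨⟨h1, by omega, by omega, h4⟩, rfl⟩
    rw [hfib, card_product, card_singleton, Nat.card_Icc, Nat.add_sub_cancel, mul_one]
  have hmaps : ∀ b ∈ diagramFinset α, b.2 - 1 ∈ range α.length := fun b hb => by
    obtain ⟨-, h2, h3, -⟩ := mem_diagramFinset.1 hb
    exact mem_range.2 (by omega)
  rw [card_eq_sum_card_fiberwise hmaps, sum_congr rfl hrow, sum_range, ← Fin.sum_univ_getElem]
  simp

lemma eq_of_mcode_eq {x y : MEntry} (hx : 1 ≤ x.1) (hy : 1 ≤ y.1) (h : mcode x = mcode y) :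
    x = y := by
  obtain ⟨a, s⟩ := x
  obtain ⟨b, t⟩ := y
  cases s <;> cases t <;> simp_all [mcode] <;> omega

lemma mcode_lt_mcode_of_fst_lt {x y : MEntry} (h : x.1 < y.1) : mcode x < mcode y := by
  unfold mcode; split_ifs <;> omega

lemma exists_forall_iff_le (Q : ℕ → Prop) (M : ℕ) (hbound : ∀ c, 1 ≤ c → Q c → c ≤ M)
    (hdown : ∀ c c', Q c → 1 ≤ c' → c' ≤ c → Q c') :
    ∃ m, ∀ c, 1 ≤ c → (Q c ↔ c ≤ m) :=
  ⟨Nat.findGreatest Q M, fun c hc => ⟨fun h => Nat.le_findGreatest (hbound c hc h) h,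
    fun h => hdown _ c (Nat.findGreatest_of_ne_zero rfl (by omega)) hc h⟩⟩

lemma isPeakDiagram_of_closed {α : List ℕ} (P : Box → Prop)
    (hsub : ∀ b, P b → inDiagram α b)
    (hrow : ∀ c c' r, P (c, r) → 1 ≤ c' → c' ≤ c → P (c', r))
    (hcol : ∀ r r', P (1, r) → 1 ≤ r' → r' ≤ r → P (1, r'))
    (hpeak : ∀ r, P (1, r) → P (1, r + 1) → P (2, r)) :
    IsPeakDiagram {b | P b} := by
  obtain ⟨ℓ, hℓ⟩ := exists_forall_iff_le (fun r => P (1, r)) α.length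
    (fun _ _ h => (hsub _ h).2.2.1) hcol
  choose f hf using fun r => exists_forall_iff_le (fun c => P (c, r)) (α.getD (r - 1) 0)
    (fun _ _ h => (hsub _ h).2.2.2) (fun c c' => hrow c c' r)
  have hfirst : ∀ r, 1 ≤ r → r ≤ ℓ → P (1, r) := fun r h1 h2 => (hℓ r h1).2 h2
  set γ := (List.range ℓ).map (fun i => f (i + 1))
  have hγ : ∀ r, 1 ≤ r → r ≤ ℓ → γ.getD (r - 1) 0 = f r := fun r h1 h2 => by
    simp [γ, show r - 1 < ℓ by omega, Nat.sub_add_cancel h1]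
  refine ⟨γ, ⟨?_, fun i hi => ?_⟩, ?_⟩
  · simp only [γ, List.mem_map, List.mem_range, forall_exists_index, and_imp]
    rintro _ i hi rfl
    exact (hf _ 1 le_rfl).1 (hfirst _ (by omega) (by omega))
  · rw [List.length_map, List.length_range] at hi
    rw [← Nat.add_sub_cancel i 1, hγ (i + 1) (by omega) (by omega)]
    exact (hf _ 2 (by norm_num)).1 (hpeak _ (hfirst _ (by omega) (by omega))
      (hfirst _ (by omega) (by omega)))
  · ext ⟨c, r⟩
    simp only [Set.mem_ofPred_eq, inDiagram, γ, List.length_map, List.length_range]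
    constructor
    · intro h
      obtain ⟨h1, h2, -, -⟩ := hsub _ h
      have hr : r ≤ ℓ := (hℓ r h2).1 (hrow c 1 r h le_rfl h1)
      exact ⟨h1, h2, hr, (hγ r h2 hr).symm ▸ (hf r c h1).1 h⟩
    · rintro ⟨h1, h2, hr, hc⟩
      exact (hf r c h1).2 (hγ r h2 hr ▸ hc)

section Standardisation

variable {n : ℕ} {α : List ℕ} {T : Box → MEntry}

lemma keyLt_irrefl (b : Box) : ¬ keyLt α T b b := by
  unfold keyLt; omega

lemma keyLt_trans {a b c : Box} (h₁ : keyLt α T a b) (h₂ : keyLt α T b c) : keyLt α T a c := by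
  unfold keyLt at *; omega

lemma keyLt_total_of_ne (hpos : ∀ b, inDiagram α b → 1 ≤ (T b).1) {a b : Box}
    (ha : inDiagram α a) (hb : inDiagram α b) (hne : a ≠ b) : keyLt α T a b ∨ keyLt α T b a := by
  rcases lt_trichotomy (mcode (T a)) (mcode (T b)) with h | h | h
  · exact Or.inl (Or.inl h)
  · have hab : T a = T b := eq_of_mcode_eq (hpos a ha) (hpos b hb) h
    have hne' : a.1 ≠ b.1 ∨ a.2 ≠ b.2 := by
      by_contra! h'
      exact hne (Prod.ext h'.1 h'.2)
    obtain ⟨-, -, ha2, -⟩ := ha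
    obtain ⟨-, -, hb2, -⟩ := hb
    unfold keyLt stdk2
    rw [hab]
    split_ifs <;> omega
  · exact Or.inr (Or.inl h)

lemma keyLt_same_row (hT : IsMPCT n α T) {c c' r : ℕ} (hcc : c < c')
    (h : inDiagram α (c, r)) (h' : inDiagram α (c', r)) : keyLt α T (c, r) (c', r) := by
  obtain ⟨hle, hmark⟩ := hT.row_weak c c' r hcc h h'
  rcases hle.lt_or_eq with hlt | heq
  · exact Or.inl hlt
  · have hTeq : T (c, r) = T (c', r) := eq_of_mcode_eq (hT.pos _ h) (hT.pos _ h') heq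
    have hunmarked : (T (c, r)).2 = false := by
      by_contra hm
      exact hmark (by simpa using hm) hTeq
    refine Or.inr ⟨heq, Or.inr ⟨?_, hcc⟩⟩
    unfold stdk2
    rw [← hTeq, hunmarked]

lemma keyLt_first_col (hT : IsMPCT n α T) {r r' : ℕ} (hrr : r < r')
    (h : inDiagram α (1, r)) (h' : inDiagram α (1, r')) : keyLt α T (1, r) (1, r') :=
  Or.inl (hT.col_strict r r' hrr h h')

/-- (MPCT3) for `k = T(1, r + 1)`: a peak diagram containing `(1, r + 1)` also contains `(2, r)`. -/
lemma fst_two_le_fst_one_succ (hT : IsMPCT n α T) {r : ℕ} (hn : (T (1, r + 1)).1 ≤ n)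
    (h2 : inDiagram α (2, r)) (h1 : inDiagram α (1, r + 1)) :
    (T (2, r)).1 ≤ (T (1, r + 1)).1 := by
  obtain ⟨γ, hγ, hset⟩ := hT.peak_filter _ hn
  have h1γ : (1, r + 1) ∈ {b | inDiagram γ b} := hset ▸ ⟨h1, le_rfl⟩
  obtain ⟨-, -, hlen, -⟩ := h1γ
  have hr : 1 ≤ r := h2.2.1
  have h2γ : (2, r) ∈ {b | inDiagram γ b} := ⟨by norm_num, hr, by omega, hγ.2 (r - 1) (by omega)⟩
  exact (hset ▸ h2γ : (2, r) ∈ {b | inDiagram α b ∧ (T b).1 ≤ (T (1, r + 1)).1}).2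

lemma keyLt_two_one_succ (hT : IsMPCT n α T) {r : ℕ} (hn : (T (1, r + 1)).1 ≤ n)
    (h2 : inDiagram α (2, r)) (h1 : inDiagram α (1, r + 1)) : keyLt α T (2, r) (1, r + 1) := by
  have hle := fst_two_le_fst_one_succ hT hn h2 h1
  cases hm : (T (2, r)).2
  · have hne := hT.mpct4 r h2 h1 hm
    exact Or.inl (mcode_lt_mcode_of_fst_lt (by omega))
  · have hpos := hT.pos _ h2
    unfold keyLt stdk2 mcode
    simp only [hm, if_true]
    split_ifs <;> omega

/-- By gap-freeness of the weight, each of the values `1, …, (T b).1` occurs in some box. -/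
lemma InMPCT.fst_le_card (hT : InMPCT n α T) {b : Box} (hb : inDiagram α b) :
    (T b).1 ≤ #(diagramFinset α) := by
  have hsub : Icc 1 (T b).1 ⊆ (diagramFinset α).image (fun a => (T a).1) := by
    intro i hi
    rw [mem_Icc] at hi
    have hwtb : wtFun α T (T b).1 ≠ 0 :=
      card_ne_zero_of_mem (mem_filter.2 ⟨mem_diagramFinset.2 hb, rfl⟩)
    have hwt : wtFun α T i ≠ 0 := by
      rcases hi.2.lt_or_eq with hlt | heq
      · exact fun h0 => hwtb (hT.2 i _ hi.1 hlt h0)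
      · exact heq ▸ hwtb
    obtain ⟨a, ha⟩ := card_ne_zero.1 hwt
    exact mem_image.2 ⟨a, (mem_filter.1 ha).1, (mem_filter.1 ha).2⟩
  simpa using (card_le_card hsub).trans card_image_le

lemma inDiagram_one_of_peakShape (hα : PeakShape α) {r : ℕ} (h1 : 1 ≤ r) (h2 : r ≤ α.length) :
    inDiagram α (1, r) := by
  refine ⟨le_rfl, h1, h2, hα.1 _ ?_⟩
  rw [List.getD_eq_getElem _ _ (by omega)]
  exact List.getElem_mem _

lemma inDiagram_two_of_peakShape (hα : PeakShape α) {r : ℕ} (h1 : 1 ≤ r) (h2 : r < α.length) :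
    inDiagram α (2, r) :=
  ⟨by norm_num, h1, h2.le, hα.2 (r - 1) (by omega)⟩

lemma isPeakDiagram_of_keyLt_downset (hα : PeakShape α) (hT : IsMPCT n α T)
    (hn : ∀ b, inDiagram α b → (T b).1 ≤ n) (P : Box → Prop) (hsub : ∀ b, P b → inDiagram α b)
    (hdown : ∀ a b, inDiagram α a → keyLt α T a b → P b → P a) :
    IsPeakDiagram {b | P b} := by
  refine isPeakDiagram_of_closed P hsub (fun c c' r h h1 h2 => ?_) (fun r r' h h1 h2 => ?_)
    (fun r h h' => ?_)
  · obtain ⟨-, hr1, hr2, hc⟩ := hsub _ h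
    rcases h2.lt_or_eq with hlt | rfl
    · have hd : inDiagram α (c', r) := ⟨h1, hr1, hr2, hlt.le.trans hc⟩
      exact hdown _ _ hd (keyLt_same_row hT hlt hd (hsub _ h)) h
    · exact h
  · rcases h2.lt_or_eq with hlt | rfl
    · have hd := inDiagram_one_of_peakShape hα h1 (hlt.le.trans (hsub _ h).2.2.1)
      exact hdown _ _ hd (keyLt_first_col hT hlt hd (hsub _ h)) h
    · exact h
  · have h1 := hsub _ h'
    have hd := inDiagram_two_of_peakShape hα (hsub _ h).2.1 h1.2.2.1
    exact hdown _ _ hd (keyLt_two_one_succ hT (hn _ h1) hd h1) h'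

def stdRank (α : List ℕ) (T : Box → MEntry) (b : Box) : ℕ :=
  #{a ∈ diagramFinset α | keyLt α T a b}

lemma stdize_of_inDiagram {b : Box} (hb : inDiagram α b) :
    stdize α T b = (stdRank α T b + 1, (T b).2) :=
  if_pos hb

lemma stdRank_lt_stdRank {a b : Box} (ha : inDiagram α a) (h : keyLt α T a b) :
    stdRank α T a < stdRank α T b := by
  refine card_lt_card ⟨fun x hx => ?_, fun hsub => ?_⟩
  · rw [mem_filter] at hx ⊢
    exact ⟨hx.1, keyLt_trans hx.2 h⟩
  · exact keyLt_irrefl a (mem_filter.1 (hsub (mem_filter.2 ⟨mem_diagramFinset.2 ha, h⟩))).2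

lemma stdRank_lt_card {b : Box} (hb : inDiagram α b) : stdRank α T b < #(diagramFinset α) :=
  card_lt_card ⟨filter_subset _ _, fun hsub =>
    keyLt_irrefl b (mem_filter.1 (hsub (mem_diagramFinset.2 hb))).2⟩

lemma stdRank_injOn (hpos : ∀ b, inDiagram α b → 1 ≤ (T b).1) :
    Set.InjOn (stdRank α T) {b | inDiagram α b} := by
  intro a ha b hb h
  by_contra hne
  rcases keyLt_total_of_ne hpos ha hb hne with hab | hba
  · exact (stdRank_lt_stdRank ha hab).ne h
  · exact (stdRank_lt_stdRank hb hba).ne' h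

lemma image_stdRank (hpos : ∀ b, inDiagram α b → 1 ≤ (T b).1) :
    (diagramFinset α).image (stdRank α T) = range #(diagramFinset α) := by
  refine eq_of_subset_of_card_le (fun x hx => ?_) ?_
  · obtain ⟨b, hb, rfl⟩ := mem_image.1 hx
    exact mem_range.2 (stdRank_lt_card (mem_diagramFinset.1 hb))
  · rw [card_range, card_image_of_injOn]
    exact (stdRank_injOn hpos).mono fun b hb => mem_diagramFinset.1 hb

lemma wtFun_stdize (hpos : ∀ b, inDiagram α b → 1 ≤ (T b).1) (i : ℕ) :
    wtFun α (stdize α T) i = if 1 ≤ i ∧ i ≤ #(diagramFinset α) then 1 else 0 := by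
  have hfilter : {b ∈ diagramFinset α | (stdize α T b).1 = i}
      = {b ∈ diagramFinset α | stdRank α T b + 1 = i} :=
    filter_congr fun b hb => by rw [stdize_of_inDiagram (mem_diagramFinset.1 hb)]
  unfold wtFun
  rw [hfilter]
  split_ifs with hi
  · obtain ⟨b, hb, hrk⟩ :=
      mem_image.1 ((image_stdRank hpos).symm ▸ mem_range.2 (by omega : i - 1 < _))
    refine card_eq_one.2 ⟨b, eq_singleton_iff_unique_mem.2 ⟨mem_filter.2 ⟨hb, by omega⟩, ?_⟩⟩
    intro a ha
    rw [mem_filter] at ha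
    exact stdRank_injOn hpos (mem_diagramFinset.1 ha.1) (mem_diagramFinset.1 hb) (by omega)
  · refine card_eq_zero.2 (filter_eq_empty_iff.2 fun b hb => ?_)
    have := stdRank_lt_card (T := T) (mem_diagramFinset.1 hb)
    omega

lemma isMPCT_stdize (hα : IsPeakComposition n α) (hT : InMPCT n α T) :
    IsMPCT n α (stdize α T) := by
  have hn : ∀ b, inDiagram α b → (T b).1 ≤ n := fun b hb => by
    rw [← hα.1.2, ← card_diagramFinset]
    exact hT.fst_le_card hb
  have hlt : ∀ a b, inDiagram α a → inDiagram α b → keyLt α T a b →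
      (stdize α T a).1 < (stdize α T b).1 := fun a b ha hb hab => by
    rw [stdize_of_inDiagram ha, stdize_of_inDiagram hb]
    exact Nat.succ_lt_succ (stdRank_lt_stdRank ha hab)
  refine ⟨fun b hb => if_neg hb, fun b hb => ?_, fun c c' r hcc h h' => ?_,
    fun r r' hrr h h' => ?_, fun k _ => ?_, fun r h2 h1 _ => ?_⟩
  · rw [stdize_of_inDiagram hb]
    omega
  · have hcc' := hlt _ _ h h' (keyLt_same_row hT.1 hcc h h')
    exact ⟨(mcode_lt_mcode_of_fst_lt hcc').le, fun _ heq => hcc'.ne (congrArg Prod.fst heq)⟩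
  · exact mcode_lt_mcode_of_fst_lt (hlt _ _ h h' (keyLt_first_col hT.1 hrr h h'))
  · exact isPeakDiagram_of_keyLt_downset hα.2 hT.1 hn _ (fun b h => h.1)
      fun a b ha hab hb => ⟨ha, (hlt a b ha hb.1 hab).le.trans hb.2⟩
  · exact (hlt _ _ h2 h1 (keyLt_two_one_succ hT.1 (hn _ h1) h2 h1)).ne'

end Standardisation

theorem stmt0 (n : ℕ) (α : List ℕ) (hα : IsPeakComposition n α)
    (T : Box → MEntry) (hT : InMPCT n α T) :
    InSMPCT n α (stdize α T) := by
  have hwt := wtFun_stdize hT.1.pos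
  rw [card_diagramFinset, hα.1.2] at hwt
  refine ⟨⟨isMPCT_stdize hα hT, fun i j hi hij h0 => ?_⟩, fun i h1 h2 => ?_⟩
  · rw [hwt] at h0 ⊢
    split_ifs at h0 ⊢ <;> omega
  · rw [hwt, if_pos ⟨h1, h2⟩]

end QSQ
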